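/- Every minimally invariant set S satisfies S ⊆ AN_Y; consequently, S_AS ⊆ AN_Y. -/

import Mathlib

/-- Nodes of the graph: the environment node `E`, predictor nodes `V j` for
`j ∈ {1, …, d}` (represented by `Fin d`), and the response node `Y`. -/
inductive Node (d : ℕ) : Type where
  | E : Node d
  | V : Fin d → Node d
  | Y : Node d
deriving DecidableEq

/-- A directed acyclic graph on `{E} ∪ {1, …, d} ∪ {Y}` in which `E` has no
parents (`E` is exogenous). -/
structure CGraph (d : ℕ) where
  adj : Node d → Node d → Prop
  acyclic : ∀ v, ¬ Relation.TransGen adj v v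
  exogenous : ∀ v, ¬ adj v Node.E

namespace CGraph

variable {d : ℕ} (G : CGraph d)

/-- Undirected adjacency: an edge between `u` and `v` in either direction. -/
def Edge (u v : Node d) : Prop := G.adj u v ∨ G.adj v u

/-- `p` is a path between `a` and `b`: a duplicate-free list of nodes starting
at `a`, ending at `b`, with consecutive nodes adjacent (in either direction). -/
def IsPath (p : List (Node d)) (a b : Node d) : Prop :=
  p.head? = some a ∧ p.getLast? = some b ∧ p.Nodup ∧ p.Chain' G.Edge

/-- `x` is a (strict) descendant of `v`. -/
def Desc (v x : Node d) : Prop := Relation.TransGen G.adj v x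

/-- The consecutive triple `u, m, w` on a path blocks the path given `C`:
either `m` is a non-collider lying in `C`, or `m` is a collider such that
neither `m` nor any of its descendants lies in `C`. -/
def BlockedAt (C : Set (Node d)) (u m w : Node d) : Prop :=
  (¬ (G.adj u m ∧ G.adj w m) ∧ m ∈ C) ∨
  ((G.adj u m ∧ G.adj w m) ∧ m ∉ C ∧ ∀ x, G.Desc m x → x ∉ C)

/-- A path `p` is blocked by `C` if some consecutive triple on it blocks it. -/
def Blocked (C : Set (Node d)) (p : List (Node d)) : Prop :=
  ∃ q u m w r, p = q ++ u :: m :: w :: r ∧ G.BlockedAt C u m w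

/-- `a` and `b` are d-separated given `C`: every path between them is blocked. -/
def DSep (a b : Node d) (C : Set (Node d)) : Prop :=
  ∀ p, G.IsPath p a b → G.Blocked C p

/-- `S ⊆ {1, …, d}` is invariant if `E` and `Y` are d-separated given `S`. -/
def Invariant (S : Set (Fin d)) : Prop := G.DSep Node.E Node.Y (Node.V '' S)

/-- `S` is minimally invariant if it is invariant and no strict subset of `S`
is invariant. -/
def MinInvariant (S : Set (Fin d)) : Prop :=
  G.Invariant S ∧ ∀ S', S' ⊂ S → ¬ G.Invariant S'

/-- `S_AS`: the union of all minimally invariant sets. -/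
def SAS : Set (Fin d) := ⋃₀ {S | G.MinInvariant S}

/-- `S_ICP`: the intersection of all invariant sets (`∅` if there are none). -/
def SICP : Set (Fin d) :=
  {j | (∃ S, G.Invariant S) ∧ ∀ S, G.Invariant S → j ∈ S}

/-- `S_AS^m`: the union of all minimally invariant sets of cardinality `≤ m`. -/
def SASm (m : ℕ) : Set (Fin d) := ⋃₀ {S | G.MinInvariant S ∧ S.ncard ≤ m}

/-- The parents of `Y` among `{1, …, d}`. -/
def paY : Set (Fin d) := {j | G.adj (Node.V j) Node.Y}

/-- The children of `E` among `{1, …, d}`. -/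
def chE : Set (Fin d) := {j | G.adj Node.E (Node.V j)}

/-- The ancestors of `Y` among `{1, …, d}`. -/
def anY : Set (Fin d) := {j | Relation.TransGen G.adj (Node.V j) Node.Y}

/-- `PA(A)`: the union of the parent sets of the elements of `A ⊆ {1, …, d}`. -/
def paOf (A : Set (Fin d)) : Set (Fin d) := {j | ∃ i ∈ A, G.adj (Node.V j) (Node.V i)}

end CGraph

/-!
Let `S` be invariant and let `S'` be its part inside `AN_Y`. If some path between `E` and `Y`
were open given `S'` but blocked given `S`, it would be blocked at a non-collider `m ∈ S \ S'`.
Leave `m` along an edge pointing away from it and keep walking along the path: the walk stays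
directed until it reaches the end of the path or the first collider. A collider of a path open
given `S'` lies in `S'` or is an ancestor of it, hence lies in `AN_Y`; the end is either `Y` or
the parentless `E`. Either way `m ∈ AN_Y`, a contradiction. Hence `S'` is invariant, and if `S`
is minimally invariant then `S' = S`.
-/

open Relation

namespace List

variable {α : Type*} {R : α → α → Prop}

theorem transGen_last_or_collider_of_isChain {m w z : α} :
    ∀ {r : List α}, R m w → (w :: r).IsChain (fun u v => R u v ∨ R v u) →
      (w :: r).getLast? = some z →
      TransGen R m z ∨ ∃ a b c, [a, b, c] <:+: m :: w :: r ∧ R a b ∧ R c b ∧ TransGen R m b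
  | [], hmw, _, hlast => by
    obtain rfl : w = z := by simpa using hlast
    exact .inl (.single hmw)
  | w' :: r, hmw, hchain, hlast => by
    obtain ⟨hww' | hw'w, hchain'⟩ := isChain_cons_cons.mp hchain
    · rw [getLast?_cons_cons] at hlast
      rcases transGen_last_or_collider_of_isChain hww' hchain' hlast with
        hz | ⟨a, b, c, hinfix, hab, hcb, hwb⟩
      · exact .inl (.head hmw hz)
      · exact .inr ⟨a, b, c, infix_cons hinfix, hab, hcb, .head hmw hwb⟩
    · exact .inr ⟨m, w, w', ⟨[], r, rfl⟩, hmw, hw'w, .single hmw⟩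

end List

namespace CGraph

variable {d : ℕ} (G : CGraph d)

theorem not_transGen_E (v : Node d) : ¬ TransGen G.adj v Node.E := fun h =>
  have ⟨_, _, hE⟩ := TransGen.tail'_iff.mp h
  G.exogenous _ hE

variable {G}

theorem IsPath.reverse {p : List (Node d)} {a b : Node d} (hp : G.IsPath p a b) :
    G.IsPath p.reverse b a := by
  obtain ⟨hhead, hlast, hnodup, hchain⟩ := hp
  refine ⟨by rwa [List.head?_reverse], by rwa [List.getLast?_reverse],
    List.nodup_reverse.mpr hnodup, List.isChain_reverse.mpr ?_⟩
  exact hchain.imp fun _ _ => Or.symm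

theorem Blocked.of_reverse {C : Set (Node d)} {p : List (Node d)}
    (h : G.Blocked C p.reverse) : G.Blocked C p := by
  obtain ⟨q, u, m, w, r, hp, hblock⟩ := h
  refine ⟨r.reverse, w, m, u, q.reverse, ?_, ?_⟩
  · rw [← List.reverse_reverse p, hp]
    simp
  · unfold BlockedAt at hblock ⊢
    rwa [and_comm (a := G.adj w m)]

theorem collider_mem_or_desc_mem_of_not_blocked {C : Set (Node d)} {p : List (Node d)}
    (hopen : ¬ G.Blocked C p) {a b c : Node d} (hinfix : [a, b, c] <:+: p) (hab : G.adj a b)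
    (hcb : G.adj c b) : b ∈ C ∨ ∃ x, G.Desc b x ∧ x ∈ C := by
  obtain ⟨s, t, rfl⟩ := hinfix
  by_contra! hnone
  exact hopen ⟨s, a, b, c, t, by simp, .inr ⟨⟨hab, hcb⟩, hnone.1, fun x hx => hnone.2 x hx⟩⟩

theorem transGen_target_or_last_of_not_blocked {C : Set (Node d)} {t a b m w : Node d}
    {p q r : List (Node d)} (hC : ∀ v ∈ C, ReflTransGen G.adj v t) (hpath : G.IsPath p a b)
    (hopen : ¬ G.Blocked C p) (hp : p = q ++ m :: w :: r) (hmw : G.adj m w) :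
    TransGen G.adj m t ∨ TransGen G.adj m b := by
  obtain ⟨-, hlast, -, hchain⟩ := hpath
  have hsuffix : m :: w :: r <:+ p := ⟨q, hp.symm⟩
  have hlast' : (w :: r).getLast? = some b := by
    rwa [hp, List.getLast?_append_of_ne_nil _ (List.cons_ne_nil _ _), List.getLast?_cons_cons]
      at hlast
  rcases List.transGen_last_or_collider_of_isChain hmw (hchain.suffix hsuffix).tail hlast' with
    hb | ⟨a, c, e, hinfix, hac, hec, hmc⟩
  · exact .inr hb
  · left
    rcases collider_mem_or_desc_mem_of_not_blocked hopen (hinfix.trans hsuffix.isInfix) hac hec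
      with hcC | ⟨x, hcx, hxC⟩
    · exact hmc.trans_left (hC c hcC)
    · exact (hmc.trans hcx).trans_left (hC x hxC)

theorem DSep.of_subset_ancestors {C C' : Set (Node d)} {t : Node d} (hsep : G.DSep Node.E t C)
    (hsub : C' ⊆ C) (hanc : ∀ v ∈ C', ReflTransGen G.adj v t)
    (hnon : ∀ v ∈ C, v ∉ C' → ¬ TransGen G.adj v t) : G.DSep Node.E t C' := by
  intro p hpath
  by_contra hopen
  obtain ⟨q, u, m, w, r, hp, hblock⟩ := hsep p hpath
  rcases hblock with ⟨hnoncollider, hmC⟩ | ⟨hcollider, hmC, hdesc⟩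
  · have hmC' : m ∉ C' := fun h => hopen ⟨q, u, m, w, r, hp, .inl ⟨hnoncollider, h⟩⟩
    refine hnon m hmC hmC' ?_
    have hinfix : [u, m, w] <:+: p := ⟨q, r, by simp [hp]⟩
    have hout : G.adj m u ∨ G.adj m w := by
      obtain ⟨hum | hmu, hmw | hwm⟩ : G.Edge u m ∧ G.Edge m w := by
        simpa only [List.isChain_cons_cons, List.isChain_singleton, and_true]
          using hpath.2.2.2.infix hinfix
      exacts [.inr hmw, absurd ⟨hum, hwm⟩ hnoncollider, .inl hmu, .inl hmu]
    rcases hout with hmu | hmw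
    · have hp' : p.reverse = (r.reverse ++ [w]) ++ m :: u :: q.reverse := by simp [hp]
      exact (transGen_target_or_last_of_not_blocked hanc hpath.reverse
        (fun h => hopen h.of_reverse) hp' hmu).resolve_right (G.not_transGen_E m)
    · have hp' : p = (q ++ [u]) ++ m :: w :: r := by simp [hp]
      exact (transGen_target_or_last_of_not_blocked hanc hpath hopen hp' hmw).elim id id
  · exact hopen ⟨q, u, m, w, r, hp,
      .inr ⟨hcollider, fun h => hmC (hsub h), fun x hx h => hdesc x hx (hsub h)⟩⟩

theorem Invariant.inter_anY {S : Set (Fin d)} (h : G.Invariant S) : G.Invariant (S ∩ G.anY) :=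
  DSep.of_subset_ancestors h (Set.image_mono Set.inter_subset_left)
    (by rintro _ ⟨i, ⟨-, hi⟩, rfl⟩; exact hi.to_reflTransGen)
    (by rintro _ ⟨i, hiS, rfl⟩ hnot hi; exact hnot ⟨i, ⟨hiS, hi⟩, rfl⟩)

theorem MinInvariant.subset_anY {S : Set (Fin d)} (h : G.MinInvariant S) : S ⊆ G.anY := by
  by_contra hS
  exact h.2 _ ⟨Set.inter_subset_left, fun hsub => hS fun _ hj => (hsub hj).2⟩ h.1.inter_anY

end CGraph

/-- every minimally invariant set `S` satisfies `S ⊆ AN_Y`;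
consequently, `S_AS ⊆ AN_Y`. -/
theorem minInvariant_subset_ancestors {d : ℕ} (G : CGraph d) :
    (∀ S : Set (Fin d), G.MinInvariant S → S ⊆ G.anY) ∧ G.SAS ⊆ G.anY :=
  ⟨fun _ hS => hS.subset_anY, Set.sUnion_subset fun _ hS => hS.subset_anY⟩
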